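/- arXiv:2207.02582 — 2 statements merged into one kernel-verified Lean document; each statement's English description precedes it below -/
import Mathlib

section
/- If q : ℝ → ℝ^n solves q'' = -∇V(q), is periodic with period T > 0, and has a brake instant at t = 0 (q'(0) = 0), then t = T/2 is also a brake instant: q'(T/2) = 0. -/
/-! A brake instant makes the solution even: `t ↦ q (-t)` solves the same equation with the same
initial data, so by uniqueness it is `q`. Then `q'` is odd and `T`-periodic, hence
`q' (T/2) = q' (-T/2) = -q' (T/2)`. -/

/-- `q` is a (C²) solution of Newton's equation `q'' = -∇V(q)`. -/
def IsSol {n : ℕ} (V : EuclideanSpace ℝ (Fin n) → ℝ)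
    (q : ℝ → EuclideanSpace ℝ (Fin n)) : Prop :=
  ContDiff ℝ 2 q ∧ ∀ t, deriv (deriv q) t = -gradient V (q t)

namespace Function

theorem Odd.eq_zero_of_periodic {α β : Type*} [AddGroup α] [AddGroup β] [IsAddTorsionFree β]
    {f : α → β} {a : α} (hf : f.Odd) (hp : f.Periodic (a + a)) : f a = 0 := by
  refine self_eq_neg.mp ?_
  calc f a = f (-a + (a + a)) := by rw [neg_add_cancel_left]
    _ = f (-a) := hp (-a)
    _ = -f a := hf a

variable {𝕜 F : Type*} [NontriviallyNormedField 𝕜] [NormedAddCommGroup F] [NormedSpace 𝕜 F]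
  {f : 𝕜 → F}

theorem Even.deriv_odd (hf : f.Even) : (deriv f).Odd := fun x => by
  have h := deriv_comp_neg f x
  rw [funext hf] at h
  rw [h, neg_neg]

theorem Periodic.deriv {c : 𝕜} (hf : f.Periodic c) : (deriv f).Periodic c := fun x => by
  rw [← deriv_comp_add_const, hf.funext]

end Function

section Newton

variable {n : ℕ} {V : EuclideanSpace ℝ (Fin n) → ℝ} {q : ℝ → EuclideanSpace ℝ (Fin n)}

theorem IsSol.comp_neg (hq : IsSol V q) : IsSol V (fun t => q (-t)) := by
  have hderiv : deriv (fun t => q (-t)) = fun t => -deriv q (-t) := funext (deriv_comp_neg q)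
  refine ⟨hq.1.comp contDiff_neg, fun t => ?_⟩
  rw [hderiv, deriv.fun_neg, deriv_comp_neg (deriv q), neg_neg, hq.2]

theorem IsSol.even_of_deriv_eq_zero
    (huniq : ∀ p r : ℝ → EuclideanSpace ℝ (Fin n), IsSol V p → IsSol V r →
      p 0 = r 0 → deriv p 0 = deriv r 0 → p = r)
    (hq : IsSol V q) (hbrake : deriv q 0 = 0) : q.Even := by
  have hrev := huniq _ q hq.comp_neg hq (by simp) (by simp [deriv_comp_neg, hbrake])
  exact fun t => congrFun hrev t

end Newton

theorem stmt2_general {n : ℕ} (V : EuclideanSpace ℝ (Fin n) → ℝ)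
    (huniq : ∀ p r : ℝ → EuclideanSpace ℝ (Fin n), IsSol V p → IsSol V r →
      p 0 = r 0 → deriv p 0 = deriv r 0 → p = r)
    (q : ℝ → EuclideanSpace ℝ (Fin n)) (hq : IsSol V q)
    (T : ℝ) (hper : ∀ t, q (t + T) = q t)
    (hbrake : deriv q 0 = 0) :
    deriv q (T / 2) = 0 := by
  have : IsAddTorsionFree (EuclideanSpace ℝ (Fin n)) := .of_module_rat _
  have hodd : (deriv q).Odd := (hq.even_of_deriv_eq_zero huniq hbrake).deriv_odd
  have hperiodic : (deriv q).Periodic (T / 2 + T / 2) := by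
    rw [add_halves]
    exact Function.Periodic.deriv hper
  exact hodd.eq_zero_of_periodic hperiodic

/-- A `T`-periodic solution with a brake instant at `t = 0` also brakes at `t = T/2`. -/
theorem stmt2 {n : ℕ} (V : EuclideanSpace ℝ (Fin n) → ℝ) (hV : ContDiff ℝ 2 V)
    (huniq : ∀ p r : ℝ → EuclideanSpace ℝ (Fin n), IsSol V p → IsSol V r →
      p 0 = r 0 → deriv p 0 = deriv r 0 → p = r)
    (q : ℝ → EuclideanSpace ℝ (Fin n)) (hq : IsSol V q)
    (T : ℝ) (hT : 0 < T) (hper : ∀ t, q (t + T) = q t)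
    (hbrake : deriv q 0 = 0) :
    deriv q (T / 2) = 0 :=
  stmt2_general V huniq q hq T hper hbrake
end

section
/- If a T-periodic solution q of the planar N-body problem with center of mass zero satisfies q(t + T/2) = R(q(t)) for a nontrivial rotation R ∈ SO(2) acting diagonally, then q(T/4) is the total collision configuration (all bodies at the origin); hence no collision-free periodic brake orbit of the planar N-body problem has its two brake configurations related by a nontrivial (label-preserving) rotation. -/
open Matrix

/-- A nontrivial 2x2 special orthogonal matrix has no nonzero fixed vector. -/
lemma so2_fixed_zero (A : Matrix (Fin 2) (Fin 2) ℝ)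
    (horth : A * star A = 1) (hdet : A.det = 1) (hA : A ≠ 1)
    (v : Fin 2 → ℝ) (hv : A.mulVec v = v) : v = 0 := by
  set a := A 0 0 with ha
  set b := A 1 0 with hb
  set c := A 0 1 with hc
  set d := A 1 1 with hd
  have h1 : a * a + c * c = 1 := by
    have := congrFun (congrFun horth 0) 0
    simpa [Matrix.mul_apply, Fin.sum_univ_two, Matrix.star_apply, Matrix.one_apply] using this
  have h2 : b * b + d * d = 1 := by
    have := congrFun (congrFun horth 1) 1
    simpa [Matrix.mul_apply, Fin.sum_univ_two, Matrix.star_apply, Matrix.one_apply] using this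
  have h3 : a * b + c * d = 0 := by
    have := congrFun (congrFun horth 0) 1
    simpa [Matrix.mul_apply, Fin.sum_univ_two, Matrix.star_apply, Matrix.one_apply] using this
  have h4 : a * d - c * b = 1 := by
    have := hdet
    rw [Matrix.det_fin_two] at this
    linarith [this]
  have hda : d = a := by linear_combination (-d) * h1 + c * h3 + a * h4
  have hcb : c = -b := by
    have hsq : (c + b) ^ 2 = 0 := by
      linear_combination h1 + h2 - 2 * h4 + (a - d) * hda
    have := pow_eq_zero_iff (n := 2) (by norm_num) |>.mp hsq
    linarith
  have hab : a * a + b * b = 1 := by linear_combination h2 - (d + a) * hda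
  have hane : a ≠ 1 := by
    intro ha1
    apply hA
    have hb0 : b = 0 := by
      have : b * b = 0 := by linear_combination hab - (a + 1) * ha1
      exact mul_self_eq_zero.mp this
    ext i j
    fin_cases i <;> fin_cases j <;>
      simp [Matrix.one_apply, ← ha, ← hb, ← hc, ← hd, ha1, hb0, hda, hcb]
  have e0 := congrFun hv 0
  have e1 := congrFun hv 1
  simp only [Matrix.mulVec, dotProduct, Fin.sum_univ_two, ← ha, ← hb, ← hc, ← hd] at e0 e1
  have key : (2 - 2 * a) ≠ 0 := fun h => hane (by linarith)
  have hv0 : (2 - 2 * a) * v 0 = 0 := by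
    linear_combination (a - 1) * e0 + b * e1 - ((a - 1) * v 1) * hcb - (b * v 1) * hda
      - (v 0) * hab
  have hv1 : (2 - 2 * a) * v 1 = 0 := by
    linear_combination (-b) * e0 + (a - 1) * e1 + (b * v 1) * hcb - ((a - 1) * v 1) * hda
      - (v 1) * hab
  funext i
  fin_cases i
  · simpa using mul_eq_zero.mp hv0 |>.resolve_left key
  · simpa using mul_eq_zero.mp hv1 |>.resolve_left key

/-- If a `T`-periodic brake solution of the planar N-body problem with center of mass
zero has its half-period translate given by a nontrivial diagonal rotation,
`q (t + T/2) = R (q t)`, then at `t = T/4` the configuration is total collision;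
hence the solution is not collision-free. -/
theorem stmt18 {N : ℕ} (hN : 2 ≤ N) (m : Fin N → ℝ) (hm : ∀ a, 0 < m a)
    (R : Matrix.specialOrthogonalGroup (Fin 2) ℝ) (hR : R ≠ 1)
    (q : ℝ → Fin N → (Fin 2 → ℝ))
    (T : ℝ) (hT : 0 < T) (hper : ∀ t, q (t + T) = q t)
    (hbrake : deriv q 0 = 0)
    (hrev : ∀ t, q t = q (-t))
    (hcm : ∀ t, ∑ a, m a • q t a = 0)
    (hrel : ∀ t a, q (t + T / 2) a = (R : Matrix (Fin 2) (Fin 2) ℝ).mulVec (q t a)) :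
    (∀ a, q (T / 4) a = 0) ∧
      ¬(∀ t, ∀ a b : Fin N, a ≠ b → q t a ≠ q t b) := by
  have hmem := R.2
  rw [Matrix.mem_specialOrthogonalGroup_iff] at hmem
  have horth : (R : Matrix (Fin 2) (Fin 2) ℝ) * star (R : Matrix (Fin 2) (Fin 2) ℝ) = 1 :=
    hmem.1.2
  have hAne : (R : Matrix (Fin 2) (Fin 2) ℝ) ≠ 1 := fun h => hR (Subtype.ext h)
  have hcol : ∀ a, q (T / 4) a = 0 := by
    intro a
    have hfix : (R : Matrix (Fin 2) (Fin 2) ℝ).mulVec (q (T / 4) a) = q (T / 4) a := by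
      have h1 : q (T / 4 + T / 2) a = (R : Matrix (Fin 2) (Fin 2) ℝ).mulVec (q (T / 4) a) :=
        hrel (T / 4) a
      have h2 : (T / 4 : ℝ) + T / 2 = -(T / 4) + T := by ring
      rw [h2, hper, ← hrev] at h1
      exact h1.symm
    exact so2_fixed_zero _ horth hmem.2 hAne _ hfix
  refine ⟨hcol, fun hfree => ?_⟩
  have h01 : (⟨0, by omega⟩ : Fin N) ≠ ⟨1, by omega⟩ := by
    simp [Fin.ext_iff]
  exact hfree (T / 4) _ _ h01 (by rw [hcol, hcol])
end
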